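/- Let E be a compact metric space, I a countable set, a : I × I → [0,∞) with a(ξ,ξ) = 0 and Σ_{ξ'} a(ξ,ξ') = 1, ρ > 0, r ≥ 0, A : C(E) → C(E) a continuous linear operator satisfying the positive maximum principle (if f ∈ C(E) attains a nonnegative maximum at x then Af(x) ≤ 0), and η a Markov kernel from E² to E. Let Π be a probability measure on M₁(E)^I, let ξ ∈ I, and suppose that Π-almost surely X_{ξ'} = δ_{x_{ξ'}} is a Dirac measure for ξ' = ξ and for every ξ' with a(ξ,ξ') > 0, and that for all f, g ∈ C(E): ∫ g(x_ξ) [ ρ Σ_{ξ' ≠ ξ} a(ξ,ξ') (f(x_{ξ'}) − f(x_ξ)) + Af(x_ξ) + r( ∫ f(u) η(x_ξ, x_ξ; du) − f(x_ξ) ) ] Π(dX) = 0. Then for every ξ' ∈ I with a(ξ,ξ') > 0, one has x_ξ = x_{ξ'} Π-almost surely. -/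

import Mathlib

open MeasureTheory Real ProbabilityTheory

noncomputable section

instance (priority := 100) {α : Type*} [MeasurableSpace α] :
    MeasurableSpace (ProbabilityMeasure α) :=
  inferInstanceAs (MeasurableSpace {μ : Measure α // IsProbabilityMeasure μ})

/-
Write `L` for the bracket of the identity, seen as an operator on `f`, and put
`Γ f := L (f²) - 2 f(x_ξ) L f`. Each of the three parts of `L` makes a nonnegative contribution to
`Γ f`: the migration part gives `ρ Σ_ζ a(ξ,ζ) (f(x_ζ) - f(x_ξ))²`, the part of `A` is nonnegative
by the positive maximum principle applied to `-(f - f(x_ξ))²`, and the resampling part gives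
`r ∫ (f - f(x_ξ))² dη(x_ξ, x_ξ)`. Taking `g = 1` and `g = 2f` in the identity yields `∫ Γ f dΠ = 0`,
hence `a(ξ,ξ') (f(x_ξ') - f(x_ξ))² = 0` `Π`-a.s. for every `f ∈ C(E)`. Distance functions to the
points of a countable dense set then separate `x_ξ` from `x_ξ'`.
-/

def SatisfiesPositiveMaximumPrinciple {E : Type*} [TopologicalSpace E]
    (A : C(E, ℝ) →ₗ[ℝ] C(E, ℝ)) : Prop :=
  ∀ (f : C(E, ℝ)) (x₀ : E), (∀ y, f y ≤ f x₀) → 0 ≤ f x₀ → A f x₀ ≤ 0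

theorem SatisfiesPositiveMaximumPrinciple.two_mul_le_apply_mul_self {E : Type*}
    [TopologicalSpace E] {A : C(E, ℝ) →ₗ[ℝ] C(E, ℝ)} (hA : SatisfiesPositiveMaximumPrinciple A)
    (f : C(E, ℝ)) (x₀ : E) :
    2 * f x₀ * A f x₀ ≤ A (f * f) x₀ := by
  set c := f x₀
  have hone : A 1 x₀ ≤ 0 := hA 1 x₀ (fun _ => le_rfl) zero_le_one
  have hsq : A (-((f - c • 1) * (f - c • 1))) x₀ ≤ 0 :=
    hA _ x₀ (fun y => by simpa [c] using mul_self_nonneg (f y - c)) (by simp [c])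
  have hexpand : -((f - c • 1) * (f - c • 1)) = (2 * c) • f - f * f - c ^ 2 • 1 := by
    ext y
    simp only [ContinuousMap.neg_apply, ContinuousMap.mul_apply, ContinuousMap.sub_apply,
      ContinuousMap.smul_apply, ContinuousMap.one_apply, smul_eq_mul]
    ring
  rw [hexpand, map_sub, map_sub, map_smul, map_smul] at hsq
  simp only [ContinuousMap.sub_apply, ContinuousMap.smul_apply, smul_eq_mul] at hsq
  nlinarith [sq_nonneg c]

theorem ContinuousMap.abs_apply_le_norm {E : Type*} [TopologicalSpace E] [CompactSpace E]
    (f : C(E, ℝ)) (y : E) : |f y| ≤ ‖f‖ :=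
  Real.norm_eq_abs (f y) ▸ f.norm_coe_le_norm y

theorem ContinuousMap.integrable_of_compactSpace {E : Type*} [TopologicalSpace E] [CompactSpace E]
    [MeasurableSpace E] [OpensMeasurableSpace E] (f : C(E, ℝ)) (ν : Measure E)
    [IsFiniteMeasure ν] : Integrable f ν :=
  .of_bound f.continuous.aestronglyMeasurable ‖f‖ (ae_of_all _ f.norm_coe_le_norm)

theorem integral_sub_const_sq {Ω : Type*} [MeasurableSpace Ω] (ν : Measure Ω)
    [IsProbabilityMeasure ν] {f : Ω → ℝ} (hf : Integrable f ν)
    (hf2 : Integrable (fun u => f u * f u) ν) (c : ℝ) :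
    ∫ u, (f u - c) ^ 2 ∂ν = (∫ u, f u * f u ∂ν - c * c) - 2 * c * (∫ u, f u ∂ν - c) := by
  have hexpand : (fun u => (f u - c) ^ 2) = fun u => f u * f u - 2 * c * f u + c ^ 2 := by
    ext u
    ring
  have hlin : Integrable (fun u => f u * f u - 2 * c * f u) ν := hf2.sub (hf.const_mul _)
  rw [hexpand, integral_add hlin (integrable_const _), integral_sub hf2 (hf.const_mul _),
    integral_const_mul, integral_const, probReal_univ]
  simp only [smul_eq_mul, one_mul]
  ring

theorem summable_mul_of_abs_le {I : Type*} {w s : I → ℝ} {C : ℝ} (hw : ∀ i, 0 ≤ w i)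
    (hws : Summable w) (hs : ∀ i, |s i| ≤ C) : Summable fun i => w i * s i :=
  .of_norm_bounded (hws.mul_right C) fun i => by
    rw [Real.norm_eq_abs, abs_mul, abs_of_nonneg (hw i)]
    exact mul_le_mul_of_nonneg_left (hs i) (hw i)

theorem le_tsum_mul_self_sub_two_mul {I : Type*} {w t : I → ℝ} {C : ℝ} (hw : ∀ i, 0 ≤ w i)
    (hws : Summable w) (ht : ∀ i, |t i| ≤ C) (c : ℝ) (j : I) :
    w j * (t j - c) ^ 2 ≤
      ∑' i, w i * (t i * t i - c * c) - 2 * c * ∑' i, w i * (t i - c) := by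
  have hdiff : ∀ i, |t i - c| ≤ C + |c| := fun i => (abs_sub _ _).trans (by linarith [ht i])
  have hs1 : Summable fun i => w i * (t i - c) := summable_mul_of_abs_le hw hws hdiff
  have hs2 : Summable fun i => w i * (t i - c) ^ 2 :=
    summable_mul_of_abs_le hw hws fun i => by
      rw [abs_pow]
      exact pow_le_pow_left₀ (abs_nonneg _) (hdiff i) 2
  have hsplit : (fun i => w i * (t i * t i - c * c)) =
      fun i => w i * (t i - c) ^ 2 + 2 * c * (w i * (t i - c)) := by
    ext i
    ring
  rw [hsplit, hs2.tsum_add (hs1.mul_left _), tsum_mul_left, add_sub_cancel_right]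
  exact hs2.le_tsum j fun i _ => mul_nonneg (hw i) (sq_nonneg _)

theorem ae_eq_zero_of_le_of_integral_eq_zero {Ω : Type*} [MeasurableSpace Ω] {μ : Measure Ω}
    {S F : Ω → ℝ} (hS : 0 ≤ S) (hSF : S ≤ F) (hS_meas : AEStronglyMeasurable S μ)
    (hF : Integrable F μ) (hF_zero : ∫ ω, F ω ∂μ = 0) : S =ᵐ[μ] 0 := by
  have hS_int : Integrable S μ :=
    hF.mono' hS_meas (ae_of_all _ fun ω => (Real.norm_of_nonneg (hS ω)).trans_le (hSF ω))
  refine (integral_eq_zero_iff_of_nonneg hS hS_int).mp (le_antisymm ?_ (integral_nonneg hS))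
  exact hF_zero ▸ integral_mono hS_int hF hSF

theorem ae_eq_of_forall_continuousMap_ae_eq {E : Type*} [MetricSpace E]
    [TopologicalSpace.SeparableSpace E] {Ω : Type*} [MeasurableSpace Ω] {μ : Measure Ω}
    {u v : Ω → E} (h : ∀ f : C(E, ℝ), ∀ᵐ ω ∂μ, f (u ω) = f (v ω)) : ∀ᵐ ω ∂μ, u ω = v ω := by
  obtain ⟨s, hs_countable, hs_dense⟩ := TopologicalSpace.exists_countable_dense E
  have hdist : ∀ᵐ ω ∂μ, ∀ z ∈ s, dist (u ω) z = dist (v ω) z :=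
    (ae_ball_iff hs_countable).mpr fun z _ => h ⟨fun y => dist y z, by fun_prop⟩
  filter_upwards [hdist] with ω hω
  have := congrFun (Continuous.ext_on hs_dense (by fun_prop) (by fun_prop) hω) (u ω)
  simpa [eq_comm] using this

section DiracGenerator

variable {E I : Type*} [TopologicalSpace E] [MeasurableSpace E]

/-- The bracket of the identity at a configuration `z`, whose value `z ζ` plays the role of the
atom `x_ζ`; the weights `w` are the row `a(ξ, ·)`. -/
def diracGenerator (w : I → ℝ) (ρ r : ℝ) (A : C(E, ℝ) →ₗ[ℝ] C(E, ℝ)) (η : Kernel (E × E) E)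
    (ξ : I) (f : C(E, ℝ)) (z : I → E) : ℝ :=
  ρ * (∑' ζ, w ζ * (f (z ζ) - f (z ξ))) + A f (z ξ)
    + r * ((∫ u, f u ∂(η (z ξ, z ξ))) - f (z ξ))

variable {w : I → ℝ} {ρ r : ℝ} {A : C(E, ℝ) →ₗ[ℝ] C(E, ℝ)} {η : Kernel (E × E) E} {ξ : I}

theorem measurable_diracGenerator [OpensMeasurableSpace E] [Countable I] (f : C(E, ℝ)) :
    Measurable (diracGenerator w ρ r A η ξ f) := by
  have hf : ∀ ζ, Measurable fun z : I → E => f (z ζ) :=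
    fun ζ => f.continuous.measurable.comp (measurable_pi_apply ζ)
  have hkernel : Measurable fun p : E × E => ∫ u, f u ∂η p :=
    f.continuous.stronglyMeasurable.integral_kernel.measurable
  have hdiag : Measurable fun z : I → E => (z ξ, z ξ) :=
    (measurable_pi_apply ξ).prodMk (measurable_pi_apply ξ)
  exact ((measurable_const.mul (Measurable.tsum fun ζ => measurable_const.mul
    ((hf ζ).sub (hf ξ)))).add ((A f).continuous.measurable.comp (measurable_pi_apply ξ))).add
    (measurable_const.mul ((hkernel.comp hdiag).sub (hf ξ)))

theorem mul_sq_sub_le_diracGenerator [CompactSpace E] [OpensMeasurableSpace E]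
    (hw : ∀ i, 0 ≤ w i) (hws : Summable w) (hρ : 0 ≤ ρ) (hr : 0 ≤ r)
    (hA : SatisfiesPositiveMaximumPrinciple A) [IsMarkovKernel η] (f : C(E, ℝ))
    (z : I → E) (ξ' : I) :
    ρ * (w ξ' * (f (z ξ') - f (z ξ)) ^ 2) ≤
      diracGenerator w ρ r A η ξ (f * f) z - 2 * f (z ξ) * diracGenerator w ρ r A η ξ f z := by
  have hmigration := le_tsum_mul_self_sub_two_mul hw hws (fun ζ => f.abs_apply_le_norm (z ζ))
    (f (z ξ)) ξ'
  have hresampling := integral_sub_const_sq (η (z ξ, z ξ))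
    (f.integrable_of_compactSpace _) ((f * f).integrable_of_compactSpace _) (f (z ξ))
  have hresampling_nonneg : 0 ≤ ∫ u, (f u - f (z ξ)) ^ 2 ∂η (z ξ, z ξ) :=
    integral_nonneg fun _ => sq_nonneg _
  have hmutation := hA.two_mul_le_apply_mul_self f (z ξ)
  simp only [diracGenerator, ContinuousMap.mul_apply] at hresampling ⊢
  nlinarith [mul_le_mul_of_nonneg_left hmigration hρ, mul_nonneg hr hresampling_nonneg]

theorem exists_abs_diracGenerator_le [CompactSpace E] (hw : ∀ i, 0 ≤ w i) (hws : Summable w)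
    [IsMarkovKernel η] (f : C(E, ℝ)) :
    ∃ C, ∀ z, |diracGenerator w ρ r A η ξ f z| ≤ C := by
  refine ⟨|ρ| * ((∑' i, w i) * (2 * ‖f‖)) + ‖A f‖ + |r| * (‖f‖ + ‖f‖), fun z => ?_⟩
  have hmigration : ‖∑' ζ, w ζ * (f (z ζ) - f (z ξ))‖ ≤ (∑' i, w i) * (2 * ‖f‖) :=
    tsum_of_norm_bounded (hws.hasSum.mul_right (2 * ‖f‖)) fun ζ => by
      rw [Real.norm_eq_abs, abs_mul, abs_of_nonneg (hw ζ)]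
      have hdiff : |f (z ζ) - f (z ξ)| ≤ 2 * ‖f‖ := (abs_sub _ _).trans <| by
        linarith [f.abs_apply_le_norm (z ζ), f.abs_apply_le_norm (z ξ)]
      exact mul_le_mul_of_nonneg_left hdiff (hw ζ)
  have hresampling : |∫ u, f u ∂η (z ξ, z ξ)| ≤ ‖f‖ := by
    simpa using norm_integral_le_of_norm_le_const (μ := η (z ξ, z ξ))
      (ae_of_all _ f.norm_coe_le_norm)
  unfold diracGenerator
  refine (abs_add_three _ _ _).trans (add_le_add (add_le_add ?_ ((A f).abs_apply_le_norm _)) ?_)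
  · rw [abs_mul, ← Real.norm_eq_abs]
    exact mul_le_mul_of_nonneg_left hmigration (abs_nonneg ρ)
  · rw [abs_mul]
    refine mul_le_mul_of_nonneg_left ((abs_sub _ _).trans ?_) (abs_nonneg r)
    linarith [f.abs_apply_le_norm (z ξ)]

theorem integrable_mul_diracGenerator_comp [CompactSpace E] [OpensMeasurableSpace E]
    [Countable I] (hw : ∀ i, 0 ≤ w i) (hws : Summable w) [IsMarkovKernel η] {Ω : Type*}
    [MeasurableSpace Ω] (μ : Measure Ω) [IsFiniteMeasure μ]
    {x : Ω → I → E} (hx : Measurable x) (f g : C(E, ℝ)) :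
    Integrable (fun ω => g (x ω ξ) * diracGenerator w ρ r A η ξ f (x ω)) μ := by
  obtain ⟨C, hC⟩ : ∃ C, ∀ z, |diracGenerator w ρ r A η ξ f z| ≤ C :=
    exists_abs_diracGenerator_le hw hws f
  refine Integrable.bdd_mul (c := ‖g‖) ?_ ?_ (ae_of_all _ fun ω => g.norm_coe_le_norm _)
  · exact .of_bound ((measurable_diracGenerator f).comp hx).aestronglyMeasurable C
      (ae_of_all _ fun ω => (Real.norm_eq_abs _).trans_le (hC _))
  · exact (g.continuous.measurable.comp (measurable_pi_apply ξ |>.comp hx)).aestronglyMeasurable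

theorem ae_apply_eq_of_integral_mul_diracGenerator_eq_zero [CompactSpace E]
    [OpensMeasurableSpace E] [Countable I] (hw : ∀ i, 0 ≤ w i) (hws : Summable w) (hρ : 0 < ρ)
    (hr : 0 ≤ r) (hA : SatisfiesPositiveMaximumPrinciple A) [IsMarkovKernel η] {Ω : Type*}
    [MeasurableSpace Ω] {μ : Measure Ω} [IsFiniteMeasure μ] {x : Ω → I → E} (hx : Measurable x)
    (h : ∀ f g : C(E, ℝ), ∫ ω, g (x ω ξ) * diracGenerator w ρ r A η ξ f (x ω) ∂μ = 0)
    {ξ' : I} (hξ' : 0 < w ξ') (f : C(E, ℝ)) :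
    ∀ᵐ ω ∂μ, f (x ω ξ') = f (x ω ξ) := by
  set L := diracGenerator w ρ r A η ξ
  have hsq : Integrable (fun ω => (1 : C(E, ℝ)) (x ω ξ) * L (f * f) (x ω)) μ :=
    integrable_mul_diracGenerator_comp hw hws μ hx _ _
  have hlin : Integrable (fun ω => ((2 : ℝ) • f) (x ω ξ) * L f (x ω)) μ :=
    integrable_mul_diracGenerator_comp hw hws μ hx _ _
  have hΓ : ∫ ω, ((1 : C(E, ℝ)) (x ω ξ) * L (f * f) (x ω)
      - ((2 : ℝ) • f) (x ω ξ) * L f (x ω)) ∂μ = 0 := by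
    rw [integral_sub hsq hlin, h, h, sub_zero]
  have hS := ae_eq_zero_of_le_of_integral_eq_zero
    (S := fun ω => ρ * (w ξ' * (f (x ω ξ') - f (x ω ξ)) ^ 2))
    (fun ω => by positivity)
    (fun ω => by
      simpa [L, mul_assoc] using mul_sq_sub_le_diracGenerator hw hws hρ.le hr hA f (x ω) ξ')
    (by fun_prop) (hsq.sub hlin) hΓ
  filter_upwards [hS] with ω hω
  have hsq_zero : (f (x ω ξ') - f (x ω ξ)) ^ 2 = 0 := by simpa [hρ.ne', hξ'.ne'] using hω
  exact sub_eq_zero.mp (pow_eq_zero_iff two_ne_zero |>.mp hsq_zero)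

end DiracGenerator

theorem dirac_coordinates_agree_general
    {E : Type*} [MetricSpace E] [CompactSpace E] [MeasurableSpace E] [BorelSpace E]
    {I : Type*} [Countable I]
    (a : I → I → ℝ) (hapos : ∀ ξ ξ', 0 ≤ a ξ ξ')
    (harow : ∀ ξ, HasSum (a ξ) 1)
    (ρ r : ℝ) (hρ : 0 < ρ) (hr : 0 ≤ r)
    (A : C(E, ℝ) →L[ℝ] C(E, ℝ))
    (hPMP : ∀ (f : C(E, ℝ)) (x₀ : E), (∀ y, f y ≤ f x₀) → 0 ≤ f x₀ → A f x₀ ≤ 0)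
    (η : Kernel (E × E) E) [IsMarkovKernel η]
    (Pi : Measure (I → ProbabilityMeasure E)) [IsProbabilityMeasure Pi]
    (ξ : I)
    (x : (I → ProbabilityMeasure E) → I → E) (hxmeas : ∀ ζ, Measurable fun X => x X ζ)
    (hident : ∀ f g : C(E, ℝ),
      (∫ X, g (x X ξ) *
          (ρ * (∑' ξ' : I, a ξ ξ' * (f (x X ξ') - f (x X ξ)))
            + A f (x X ξ)
            + r * ((∫ u, f u ∂(η (x X ξ, x X ξ))) - f (x X ξ))) ∂Pi) = 0) :
    ∀ ξ' : I, 0 < a ξ ξ' → ∀ᵐ X ∂Pi, x X ξ = x X ξ' := by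
  intro ξ' hξ'
  refine ae_eq_of_forall_continuousMap_ae_eq fun f => ?_
  have hf := ae_apply_eq_of_integral_mul_diracGenerator_eq_zero (A := A.toLinearMap)
    (hapos ξ) (harow ξ).summable hρ hr hPMP (measurable_pi_iff.mpr hxmeas) hident hξ' f
  exact hf.mono fun _ => Eq.symm

/-- Let `E` be compact metric, `I` countable, `a` a migration matrix, `ρ > 0`,
`r ≥ 0`, `A` a continuous linear operator on `C(E)` satisfying the positive maximum principle,
and `η` a Markov kernel from `E²` to `E`.  Suppose `Π`-a.s. the coordinates `X_ξ` and `X_{ξ'}`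
(for all `ξ'` with `a(ξ,ξ') > 0`) are the Dirac measures `δ_{x_ξ}`, `δ_{x_{ξ'}}`, and that for
all `f, g ∈ C(E)`:
`∫ g(x_ξ)[ρ Σ_{ξ'} a(ξ,ξ')(f(x_{ξ'}) − f(x_ξ)) + Af(x_ξ) + r(∫ f dη(x_ξ,x_ξ) − f(x_ξ))] dΠ = 0`.
Then for every `ξ'` with `a(ξ,ξ') > 0`, `x_ξ = x_{ξ'}` `Π`-a.s. -/
theorem dirac_coordinates_agree
    {E : Type*} [MetricSpace E] [CompactSpace E] [MeasurableSpace E] [BorelSpace E]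
    {I : Type*} [Countable I]
    (a : I → I → ℝ) (ha0 : ∀ ξ, a ξ ξ = 0) (hapos : ∀ ξ ξ', 0 ≤ a ξ ξ')
    (harow : ∀ ξ, HasSum (a ξ) 1)
    (ρ r : ℝ) (hρ : 0 < ρ) (hr : 0 ≤ r)
    (A : C(E, ℝ) →L[ℝ] C(E, ℝ))
    (hPMP : ∀ (f : C(E, ℝ)) (x₀ : E), (∀ y, f y ≤ f x₀) → 0 ≤ f x₀ → A f x₀ ≤ 0)
    (η : Kernel (E × E) E) [IsMarkovKernel η]
    (Pi : Measure (I → ProbabilityMeasure E)) [IsProbabilityMeasure Pi]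
    (ξ : I)
    (x : (I → ProbabilityMeasure E) → I → E) (hxmeas : ∀ ζ, Measurable fun X => x X ζ)
    (hdirac : ∀ᵐ X ∂Pi, (X ξ : Measure E) = Measure.dirac (x X ξ) ∧
      ∀ ξ' : I, 0 < a ξ ξ' → (X ξ' : Measure E) = Measure.dirac (x X ξ'))
    (hident : ∀ f g : C(E, ℝ),
      (∫ X, g (x X ξ) *
          (ρ * (∑' ξ' : I, a ξ ξ' * (f (x X ξ') - f (x X ξ)))
            + A f (x X ξ)
            + r * ((∫ u, f u ∂(η (x X ξ, x X ξ))) - f (x X ξ))) ∂Pi) = 0) :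
    ∀ ξ' : I, 0 < a ξ ξ' → ∀ᵐ X ∂Pi, x X ξ = x X ξ' :=
  dirac_coordinates_agree_general a hapos harow ρ r hρ hr A hPMP η Pi ξ x hxmeas hident
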